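/- arXiv:1705.03492 — 4 statements merged into one kernel-verified Lean document; each statement's English description precedes it below -/
import Mathlib

section
/- Let F be a field with char F ≠ 2, A a commutative (not necessarily associative or unital) F-algebra, η ∈ F with η ∉ {0,1}, and a ∈ A an η-axis. Then the map τ_a : A → A defined by x ↦ x₊ − x₋, where x = x₊ + x₋ with x₊ ∈ A_1(a) ⊕ A_0(a) and x₋ ∈ A_η(a), is an algebra automorphism of A satisfying τ_a ∘ τ_a = id. -/
universe u v

section Prelim

variable (F : Type u) {A : Type v} [Field F] [NonUnitalNonAssocCommRing A]
  [Module F A] [SMulCommClass F A A] [IsScalarTower F A A]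

/-- The λ-eigenspace of the adjoint map `ad_a : x ↦ a * x`. -/
def eigSp (a : A) (l : F) : Submodule F A where
  carrier := {x | a * x = l • x}
  add_mem' := by
    intro x y hx hy
    simp only [Set.mem_setOf_eq] at *
    rw [mul_add, hx, hy, smul_add]
  zero_mem' := by simp
  smul_mem' := by
    intro c x hx
    simp only [Set.mem_setOf_eq] at *
    rw [mul_smul_comm, hx, smul_smul, smul_smul, mul_comm]

/-- `a` is a (primitive) `η`-axis. -/
structure IsAxis (η : F) (a : A) : Prop where
  ne_zero : a ≠ 0
  idem : a * a = a
  decomp : eigSp F a 1 ⊔ eigSp F a 0 ⊔ eigSp F a η = ⊤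
  prim : eigSp F a 1 = Submodule.span F {a}
  f11 : ∀ x ∈ eigSp F a 1, ∀ y ∈ eigSp F a 1, x * y ∈ eigSp F a 1
  f00 : ∀ x ∈ eigSp F a 0, ∀ y ∈ eigSp F a 0, x * y ∈ eigSp F a 0
  f10 : ∀ x ∈ eigSp F a 1, ∀ y ∈ eigSp F a 0, x * y = 0
  fpe : ∀ x ∈ eigSp F a 1 ⊔ eigSp F a 0, ∀ y ∈ eigSp F a η, x * y ∈ eigSp F a η
  fee : ∀ x ∈ eigSp F a η, ∀ y ∈ eigSp F a η, x * y ∈ eigSp F a 1 ⊔ eigSp F a 0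

/-- `τ` is the Miyamoto involution of the `η`-axis `a`. -/
structure IsMiyamoto (η : F) (a : A) (τ : A → A) : Prop where
  fixes : ∀ x ∈ eigSp F a 1 ⊔ eigSp F a 0, τ x = x
  negates : ∀ x ∈ eigSp F a η, τ x = -x
  map_add : ∀ x y : A, τ (x + y) = τ x + τ y
  map_smul : ∀ (c : F) (x : A), τ (c • x) = c • τ x
  map_mul : ∀ x y : A, τ (x * y) = τ x * τ y
  bijective : Function.Bijective τ

/-- `c = φ_a(u)`, the projection of `u` to `F·a` w.r.t. the axis `a`. -/
def IsProjCoeff (η : F) (a u : A) (c : F) : Prop :=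
  ∃ u0 ∈ eigSp F a 0, ∃ ue ∈ eigSp F a η, u = c • a + u0 + ue

/-- `e` is an identity element of the subalgebra `N`. -/
def IsIdentOf (N : NonUnitalSubalgebra F A) (e : A) : Prop :=
  e ∈ N ∧ ∀ z ∈ N, e * z = z

/-- `ψ` is an `F`-algebra automorphism of `A`. -/
structure IsAlgAut (ψ : A → A) : Prop where
  map_add : ∀ x y : A, ψ (x + y) = ψ x + ψ y
  map_smul : ∀ (c : F) (x : A), ψ (c • x) = c • ψ x
  map_mul : ∀ x y : A, ψ (x * y) = ψ x * ψ y
  bijective : Function.Bijective ψ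

/-- The graph `Δ_𝒜`: distinct axes are adjacent iff their product is nonzero. -/
def axesGraph (𝒜 : Set A) : SimpleGraph 𝒜 where
  Adj x y := x ≠ y ∧ (x : A) * (y : A) ≠ 0
  symm := by
    constructor
    rintro x y ⟨hxy, hm⟩
    exact ⟨hxy.symm, by rwa [mul_comm]⟩
  loopless := by constructor; rintro x ⟨h, -⟩; exact h rfl

/-- Multiplication of the Jordan algebra of Clifford type `J(V,B) = F·e ⊕ V`. -/
def cliffMul {V : Type*} [AddCommGroup V] [Module F V]
    (B : V →ₗ[F] V →ₗ[F] F) (x y : F × V) : F × V :=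
  (x.1 * y.1 + B x.2 y.2, x.1 • y.2 + y.1 • x.2)

end Prelim

/-- An isomorphism of `A` with a Jordan algebra of Clifford type `J(V,B)`. -/
structure CliffordTypeIso (F : Type u) (A : Type v) [Field F]
    [NonUnitalNonAssocCommRing A] [Module F A] [SMulCommClass F A A]
    [IsScalarTower F A A] where
  V : Type v
  [instAdd : AddCommGroup V]
  [instMod : Module F V]
  B : V →ₗ[F] V →ₗ[F] F
  symm : ∀ v w : V, B v w = B w v
  iso : A ≃ₗ[F] F × V
  mul_compat : ∀ x y : A, iso (x * y) = cliffMul F B (iso x) (iso y)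

/-!
The fusion rules say that `A = (A₁(a) ⊕ A₀(a)) ⊕ A_η(a)` is a `ℤ/2`-grading of `A`, and the map
that is `+1` on the even part and `-1` on the odd part of any `ℤ/2`-grading is an involutive
algebra automorphism. The sum is direct because eigenspaces of `ad_a` for the distinct eigenvalues
`1, 0, η` are independent.
-/

namespace Submodule

variable {R A : Type*} [Ring R] [NonUnitalNonAssocRing A] [Module R A]
  {P Q : Submodule R A}

noncomputable def gradingInvolution (hc : IsCompl P Q) : A →ₗ[R] A :=
  LinearMap.ofIsCompl hc P.subtype (-Q.subtype)

theorem gradingInvolution_add (hc : IsCompl P Q) {xp xm : A} (hxp : xp ∈ P) (hxm : xm ∈ Q) :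
    gradingInvolution hc (xp + xm) = xp - xm := by
  rw [map_add, sub_eq_add_neg]
  exact congr_arg₂ (· + ·) (LinearMap.ofIsCompl_apply_left hc ⟨xp, hxp⟩)
    (LinearMap.ofIsCompl_apply_right hc ⟨xm, hxm⟩)

theorem exists_add_eq_of_isCompl (hc : IsCompl P Q) (x : A) :
    ∃ xp ∈ P, ∃ xm ∈ Q, xp + xm = x :=
  let ⟨u, v, huv, _⟩ := existsUnique_add_of_isCompl hc x
  ⟨u, u.2, v, v.2, huv⟩

theorem gradingInvolution_involutive (hc : IsCompl P Q) :
    Function.Involutive (gradingInvolution hc) := by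
  intro x
  obtain ⟨xp, hxp, xm, hxm, rfl⟩ := exists_add_eq_of_isCompl hc x
  rw [gradingInvolution_add hc hxp hxm, sub_eq_add_neg,
    gradingInvolution_add hc hxp (neg_mem hxm), sub_neg_eq_add]

theorem gradingInvolution_mul (hc : IsCompl P Q)
    (hPP : ∀ x ∈ P, ∀ y ∈ P, x * y ∈ P) (hQQ : ∀ x ∈ Q, ∀ y ∈ Q, x * y ∈ P)
    (hPQ : ∀ x ∈ P, ∀ y ∈ Q, x * y ∈ Q) (hQP : ∀ x ∈ Q, ∀ y ∈ P, x * y ∈ Q) (x y : A) :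
    gradingInvolution hc (x * y) = gradingInvolution hc x * gradingInvolution hc y := by
  obtain ⟨xp, hxp, xm, hxm, rfl⟩ := exists_add_eq_of_isCompl hc x
  obtain ⟨yp, hyp, ym, hym, rfl⟩ := exists_add_eq_of_isCompl hc y
  have hmul : (xp + xm) * (yp + ym) = (xp * yp + xm * ym) + (xp * ym + xm * yp) := by
    simp only [add_mul, mul_add]; abel
  rw [hmul, gradingInvolution_add hc (add_mem (hPP _ hxp _ hyp) (hQQ _ hxm _ hym))
      (add_mem (hPQ _ hxp _ hym) (hQP _ hxm _ hyp)),
    gradingInvolution_add hc hxp hxm, gradingInvolution_add hc hyp hym]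
  simp only [sub_mul, mul_sub]
  abel

end Submodule

section Axis

variable {F : Type u} {A : Type v} [Field F] [NonUnitalNonAssocCommRing A]
  [Module F A] [SMulCommClass F A A]

theorem eigSp_eq_eigenspace (a : A) (l : F) :
    eigSp F a l = Module.End.eigenspace (LinearMap.mulLeft F a) l := by
  ext x
  rw [Module.End.mem_eigenspace_iff]
  rfl

theorem disjoint_eigSp_sup_eigSp (a : A) {l μ ν : F} (hμ : l ≠ μ) (hν : l ≠ ν) :
    Disjoint (eigSp F a μ ⊔ eigSp F a ν) (eigSp F a l) := by
  have h := (Module.End.eigenspaces_iSupIndep (LinearMap.mulLeft F a)).disjoint_biSup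
    (y := {μ, ν}) (x := l) (by simp [hμ, hν])
  rw [iSup_pair] at h
  simpa only [eigSp_eq_eigenspace] using h.symm

namespace IsAxis

variable {η : F} {a : A}

theorem isCompl (ha : IsAxis F η a) (hη0 : η ≠ 0) (hη1 : η ≠ 1) :
    IsCompl (eigSp F a 1 ⊔ eigSp F a 0) (eigSp F a η) :=
  ⟨disjoint_eigSp_sup_eigSp a hη1 hη0, codisjoint_iff.mpr ha.decomp⟩

theorem mul_mem_sup (ha : IsAxis F η a) {x y : A} (hx : x ∈ eigSp F a 1 ⊔ eigSp F a 0)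
    (hy : y ∈ eigSp F a 1 ⊔ eigSp F a 0) : x * y ∈ eigSp F a 1 ⊔ eigSp F a 0 := by
  obtain ⟨x1, hx1, x0, hx0, rfl⟩ := Submodule.mem_sup.mp hx
  obtain ⟨y1, hy1, y0, hy0, rfl⟩ := Submodule.mem_sup.mp hy
  have hmul : (x1 + x0) * (y1 + y0) = x1 * y1 + x0 * y0 := by
    rw [add_mul, mul_add, mul_add, ha.f10 _ hx1 _ hy0, mul_comm x0, ha.f10 _ hy1 _ hx0]
    abel
  rw [hmul]
  exact Submodule.add_mem_sup (ha.f11 _ hx1 _ hy1) (ha.f00 _ hx0 _ hy0)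

end IsAxis

end Axis

theorem miyamoto_automorphism_general
    {F : Type u} {A : Type v} [Field F] [NonUnitalNonAssocCommRing A]
    [Module F A] [SMulCommClass F A A]
    (η : F) (hη0 : η ≠ 0) (hη1 : η ≠ 1)
    (a : A) (ha : IsAxis F η a) :
    ∃ τ : A → A,
      (∀ xp ∈ eigSp F a 1 ⊔ eigSp F a 0, ∀ xm ∈ eigSp F a η,
        τ (xp + xm) = xp - xm) ∧
      IsAlgAut F τ ∧ τ ∘ τ = id := by
  have hc := ha.isCompl hη0 hη1
  set τ := Submodule.gradingInvolution hc
  have hinv := Submodule.gradingInvolution_involutive hc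
  have hmul : ∀ x y, τ (x * y) = τ x * τ y :=
    Submodule.gradingInvolution_mul hc (fun _ hx _ hy => ha.mul_mem_sup hx hy) ha.fee ha.fpe
      fun x hx y hy => mul_comm y x ▸ ha.fpe y hy x hx
  exact ⟨τ, fun _ hxp _ hxm => Submodule.gradingInvolution_add hc hxp hxm,
    ⟨τ.map_add, τ.map_smul, hmul, hinv.bijective⟩, hinv.comp_self⟩

/-- For an `η`-axis `a` in a commutative nonassociative `F`-algebra
`A`, the map `τ_a : x ↦ x₊ − x₋` (where `x = x₊ + x₋` with
`x₊ ∈ A₁(a) ⊕ A₀(a)` and `x₋ ∈ A_η(a)`) is an algebra automorphism of `A`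
with `τ_a ∘ τ_a = id`. -/
theorem miyamoto_automorphism
    {F : Type u} {A : Type v} [Field F] [NonUnitalNonAssocCommRing A]
    [Module F A] [SMulCommClass F A A] [IsScalarTower F A A]
    (hchar : (2 : F) ≠ 0) (η : F) (hη0 : η ≠ 0) (hη1 : η ≠ 1)
    (a : A) (ha : IsAxis F η a) :
    ∃ τ : A → A,
      (∀ xp ∈ eigSp F a 1 ⊔ eigSp F a 0, ∀ xm ∈ eigSp F a η,
        τ (xp + xm) = xp - xm) ∧
      IsAlgAut F τ ∧ τ ∘ τ = id :=
  miyamoto_automorphism_general η hη0 hη1 a ha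
end

section
/- Let A be a primitive axial algebra of Jordan type 1/2 over a field F with char F ≠ 2, generated by a set 𝒜 of (1/2)-axes. Assume A contains two (1/2)-axes a, b ∈ 𝒜 such that a + b is an identity element e of A, and that for every c ∈ 𝒜 the product v_a v_c lies in F·e, where v_x = x − (1/2)e. Then A is isomorphic as an F-algebra to a Jordan algebra of Clifford type J(V,B) for some F-vector space V with symmetric bilinear form B. -/
universe u v

/-!
Write `e = a + b` and `u = a - b`. As `e` is the identity, `u * u = e`, and the `1/2`-eigenspace
`H` of `a` is the annihilator of `u`; the Peirce decomposition of `a`, with `A₀(a) ⊆ A₁(b) = F b`,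
gives `A = F e ⊕ F u ⊕ H`. The hypothesis on `v_a v_c` says that every `c ∈ 𝒜` has the form
`c = e / 2 + β u + h` with `h ∈ H`. For `x ∈ H`, the product `h x = c x - x / 2` lies in
`A₁(a) + A₀(a) = F e + F u`, while `c (h x) = c (c x) - c x / 2` is a multiple of `c`; comparing
`H`-components forces `h x ∈ F e`. So `F e + F u + {h ∈ H | h H ⊆ F e}` is a subalgebra containing
`𝒜`, hence `H H ⊆ F e`, and `A = F e ⊕ V` with `V = F u ⊕ H` and `V V ⊆ F e` is of Clifford type.
-/

open Submodule

variable {F : Type u} {A : Type v} [Field F] [NonUnitalNonAssocCommRing A] [Module F A]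

namespace CliffordTypeIso

variable (e : A) (he : e ≠ 0) (V : Submodule F A) (hV : IsCompl (F ∙ e) V)

noncomputable def splitting : (F × V) ≃ₗ[F] A :=
  ((LinearEquiv.toSpanNonzeroSingleton F A e he).prodCongr (LinearEquiv.refl F V)).trans
    (prodEquivOfIsCompl _ _ hV)

lemma splitting_apply (p : F × V) : splitting e he V hV p = p.1 • e + p.2 := rfl

variable [SMulCommClass F A A] [IsScalarTower F A A]

noncomputable def form : V →ₗ[F] V →ₗ[F] F :=
  ((LinearMap.mul F A).compl₁₂ V.subtype V.subtype).compr₂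
    ((LinearMap.fst F F V).comp (splitting e he V hV).symm.toLinearMap)

lemma mul_eq_form_smul (hVV : ∀ v ∈ V, ∀ w ∈ V, v * w ∈ F ∙ e) (v w : V) :
    (v : A) * w = form e he V hV v w • e := by
  obtain ⟨k, hk⟩ := mem_span_singleton.mp (hVV v v.2 w w.2)
  have hsplit : (splitting e he V hV).symm ((v : A) * w) = (k, 0) := by
    rw [LinearEquiv.symm_apply_eq, splitting_apply, ← hk]
    simp
  change _ = ((splitting e he V hV).symm ((v : A) * w)).1 • e
  rw [hsplit, hk]

noncomputable def ofIsCompl (hone : ∀ x, e * x = x)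
    (hVV : ∀ v ∈ V, ∀ w ∈ V, v * w ∈ F ∙ e) : CliffordTypeIso F A where
  V := V
  B := form e he V hV
  symm v w := by simp only [form, LinearMap.compr₂_apply, LinearMap.compl₁₂_apply,
    LinearMap.mul_apply', mul_comm]
  iso := (splitting e he V hV).symm
  mul_compat x y := by
    rw [LinearEquiv.symm_apply_eq]
    obtain ⟨p, rfl⟩ := (splitting e he V hV).surjective x
    obtain ⟨q, rfl⟩ := (splitting e he V hV).surjective y
    rw [LinearEquiv.symm_apply_apply, LinearEquiv.symm_apply_apply]
    have hpe : (p.2 : A) * e = p.2 := mul_comm (p.2 : A) e ▸ hone _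
    simp only [splitting_apply, cliffMul, coe_add,
      coe_smul, mul_add, add_mul, smul_mul_assoc, mul_smul_comm, hone, hpe,
      mul_eq_form_smul e he V hV hVV]
    module

end CliffordTypeIso

variable [SMulCommClass F A A]

@[simp]
lemma mem_eigSp {a x : A} {l : F} : x ∈ eigSp F a l ↔ a * x = l • x := Iff.rfl

namespace IsAxis

variable {η : F} {c : A}

lemma exists_eq_smul_add_add (hc : IsAxis F η c) (x : A) :
    ∃ (γ : F) (y z : A), y ∈ eigSp F c 0 ∧ z ∈ eigSp F c η ∧ x = γ • c + y + z := by
  have hx : x ∈ eigSp F c 1 ⊔ eigSp F c 0 ⊔ eigSp F c η := hc.decomp ▸ mem_top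
  obtain ⟨w, hw, z, hz, rfl⟩ := mem_sup.mp hx
  obtain ⟨u, hu, y, hy, rfl⟩ := mem_sup.mp hw
  rw [hc.prim] at hu
  obtain ⟨γ, rfl⟩ := mem_span_singleton.mp hu
  exact ⟨γ, y, z, hy, hz, rfl⟩

lemma mul_mul_sub_smul_mul_mem_span (hc : IsAxis F η c) (x : A) :
    c * (c * x) - η • (c * x) ∈ F ∙ c := by
  obtain ⟨γ, y, z, hy, hz, rfl⟩ := hc.exists_eq_smul_add_add x
  rw [mem_eigSp] at hy hz
  refine mem_span_singleton.mpr ⟨γ - η * γ, ?_⟩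
  simp only [mul_add, mul_smul_comm, hc.idem, hy, hz]
  module

end IsAxis

section IdentitySum

variable {a b : A}

lemma mul_eq_zero_of_add_mul_eq_self (haa : a * a = a) (he : ∀ x, (a + b) * x = x) :
    b * a = 0 := by
  simpa [add_mul, haa] using he a

lemma sub_mul_sub_of_add_mul_eq_self (haa : a * a = a) (he : ∀ x, (a + b) * x = x) :
    (a - b) * (a - b) = a + b := by
  have hba := mul_eq_zero_of_add_mul_eq_self haa he
  have hbb : b * b = b := by simpa [add_mul, mul_comm a b, hba] using he b
  rw [sub_mul, mul_sub, mul_sub, haa, hbb, hba, mul_comm, hba]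
  abel

lemma mem_eigSp_half_iff [NeZero (2 : F)] (he : ∀ x, (a + b) * x = x) {x : A} :
    x ∈ eigSp F a (1 / 2) ↔ (a - b) * x = 0 := by
  have hbx : b * x = x - a * x := eq_sub_of_add_eq' (by rw [← add_mul, he])
  rw [mem_eigSp, sub_mul, hbx]
  constructor <;> intro h
  · linear_combination (norm := module) 2 • h + (add_halves (1 : F)) • x
  · linear_combination (norm := module) (1 / 2 : F) • h - (add_halves (1 : F)) • (a * x)

lemma eigSp_zero_le_span {η : F} (hb : IsAxis F η b) (he : ∀ x, (a + b) * x = x) :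
    eigSp F a 0 ≤ F ∙ b := by
  intro x hx
  rw [mem_eigSp, zero_smul] at hx
  rw [← hb.prim, mem_eigSp, one_smul]
  simpa [add_mul, hx] using he x

lemma linearIndependent_add_sub [NeZero (2 : F)] (ha : a ≠ 0) (hb : b ≠ 0) (haa : a * a = a)
    (he : ∀ x, (a + b) * x = x) : LinearIndependent F ![a + b, a - b] := by
  have hab0 : a * b = 0 := mul_comm a b ▸ mul_eq_zero_of_add_mul_eq_self haa he
  refine LinearIndependent.pair_iff.mpr fun s t hst => ?_
  have hsum : (s + t) • a + (s - t) • b = 0 := by linear_combination (norm := module) hst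
  have hplus : s + t = 0 := by
    simpa [mul_add, mul_smul_comm, haa, hab0, ha] using congrArg (a * ·) hsum
  have hminus : s - t = 0 := by simpa [hplus, hb] using hsum
  have hs : s = 0 :=
    (mul_eq_zero.mp (by linear_combination hplus + hminus : (2 : F) * s = 0)).resolve_left
      two_ne_zero
  exact ⟨hs, by linear_combination hplus - hs⟩

lemma disjoint_span_eigSp_half [NeZero (2 : F)] (haa : a * a = a) (he : ∀ x, (a + b) * x = x) :
    Disjoint (span F {a + b, a - b}) (eigSp F a (1 / 2)) := by
  rw [disjoint_def]
  intro x hS hH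
  have hae : a * (a + b) = a := mul_comm (a + b) a ▸ he a
  have hau : a * (a - b) = a := by
    rw [mul_sub, haa, mul_comm, mul_eq_zero_of_add_mul_eq_self haa he, sub_zero]
  have hproj : a * (a * x) = a * x := by
    obtain ⟨α, β, rfl⟩ := mem_span_pair.mp hS
    simp only [mul_add, mul_smul_comm, hae, hau, haa]
  rw [mem_eigSp] at hH
  rw [hH, mul_smul_comm, hH] at hproj
  have hx : (1 / 2 : F) • x = x := smul_right_injective A (one_div_ne_zero two_ne_zero) hproj
  linear_combination (norm := module) (-2 : F) • hx + (add_halves (1 : F)) • x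

lemma exists_eq_smul_add_smul_add [NeZero (2 : F)] (ha : IsAxis F (1 / 2) a) {η : F}
    (hb : IsAxis F η b) (he : ∀ x, (a + b) * x = x) (x : A) :
    ∃ (α β : F) (h : A), h ∈ eigSp F a (1 / 2) ∧ x = α • (a + b) + β • (a - b) + h := by
  obtain ⟨γ, y, z, hy, hz, rfl⟩ := ha.exists_eq_smul_add_add x
  obtain ⟨t, rfl⟩ := mem_span_singleton.mp (eigSp_zero_le_span hb he hy)
  refine ⟨(γ + t) / 2, (γ - t) / 2, z, hz, ?_⟩
  linear_combination (norm := module) -(add_halves γ) • a - (add_halves t) • b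

lemma eigSp_one_sup_eigSp_zero_le [NeZero (2 : F)] {η η' : F} (ha : IsAxis F η a)
    (hb : IsAxis F η' b) (he : ∀ x, (a + b) * x = x) :
    eigSp F a 1 ⊔ eigSp F a 0 ≤ span F {a + b, a - b} := by
  rw [ha.prim]
  refine sup_le ?_ ((eigSp_zero_le_span hb he).trans ?_) <;>
    rw [span_singleton_le_iff_mem, mem_span_pair]
  · exact ⟨1 / 2, 1 / 2, by linear_combination (norm := module) (add_halves (1 : F)) • a⟩
  · exact ⟨1 / 2, -(1 / 2), by linear_combination (norm := module) (add_halves (1 : F)) • b⟩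

lemma isCompl_span_sup_eigSp_half [NeZero (2 : F)] (ha : IsAxis F (1 / 2) a) {η : F}
    (hb : IsAxis F η b) (he : ∀ x, (a + b) * x = x) (hli : LinearIndependent F ![a + b, a - b]) :
    IsCompl (F ∙ (a + b)) ((F ∙ (a - b)) ⊔ eigSp F a (1 / 2)) := by
  constructor
  · rw [disjoint_def]
    intro x hx hV
    obtain ⟨t, rfl⟩ := mem_span_singleton.mp hx
    obtain ⟨v, hv, h, hh, hvh⟩ := mem_sup.mp hV
    obtain ⟨s, rfl⟩ := mem_span_singleton.mp hv
    have hh0 : h = 0 := disjoint_def.mp (disjoint_span_eigSp_half ha.idem he) h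
      (mem_span_pair.mpr ⟨t, -s, by rw [← hvh]; module⟩) hh
    obtain ⟨ht, -⟩ := LinearIndependent.pair_iff.mp hli t (-s)
      (by rw [← hvh, hh0]; module)
    rw [ht, zero_smul]
  · rw [codisjoint_iff, eq_top_iff]
    intro x _
    obtain ⟨α, β, h, hh, rfl⟩ := exists_eq_smul_add_smul_add ha hb he x
    exact add_mem (add_mem (mem_sup_left (smul_mem _ _ (mem_span_singleton_self _)))
      (mem_sup_right (mem_sup_left (smul_mem _ _ (mem_span_singleton_self _)))))
      (mem_sup_right (mem_sup_right hh))

end IdentitySum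

variable [IsScalarTower F A A]

def scalarMulPart (N : Submodule F A) (e : A) : Submodule F A where
  carrier := {m | m ∈ N ∧ ∀ y ∈ N, m * y ∈ F ∙ e}
  add_mem' := fun ⟨hx, hxN⟩ ⟨hy, hyN⟩ =>
    ⟨add_mem hx hy, fun z hz => add_mul _ _ z ▸ add_mem (hxN z hz) (hyN z hz)⟩
  zero_mem' := ⟨zero_mem N, fun z _ => (zero_mul z).symm ▸ zero_mem _⟩
  smul_mem' := fun r _ ⟨hx, hxN⟩ =>
    ⟨smul_mem N r hx, fun z hz => (smul_mul_assoc r _ z).symm ▸ smul_mem _ r (hxN z hz)⟩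

section Square

variable {e u : A} {N : Submodule F A}

lemma mul_mem_span_pair_sup_scalarMulPart (he : ∀ x, e * x = x) (huu : u * u = e)
    (huN : ∀ n ∈ N, u * n = 0) {x y : A} (hx : x ∈ span F {e, u} ⊔ scalarMulPart N e)
    (hy : y ∈ span F {e, u} ⊔ scalarMulPart N e) : x * y ∈ span F {e, u} ⊔ scalarMulPart N e := by
  obtain ⟨s, hs, m, hm, rfl⟩ := mem_sup.mp hx
  obtain ⟨s', hs', m', hm', rfl⟩ := mem_sup.mp hy
  obtain ⟨α, β, rfl⟩ := mem_span_pair.mp hs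
  obtain ⟨α', β', rfl⟩ := mem_span_pair.mp hs'
  obtain ⟨k, hk⟩ := mem_span_singleton.mp (hm.2 m' hm'.1)
  have hue : u * e = u := mul_comm e u ▸ he u
  have hme : m * e = m := mul_comm e m ▸ he m
  have hmu : m * u = 0 := mul_comm u m ▸ huN m hm.1
  refine mem_sup.mpr ⟨(α * α' + β * β' + k) • e + (α * β' + β * α') • u,
    mem_span_pair.mpr ⟨_, _, rfl⟩, α • m' + α' • m,
    add_mem (smul_mem _ _ hm') (smul_mem _ _ hm), ?_⟩
  simp only [add_mul, mul_add, smul_mul_assoc, mul_smul_comm, he, hue, huu, huN m' hm'.1, hme,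
    hmu, ← hk]
  module

lemma mul_mem_span_of_mem_span_sup (huu : u * u = e) (huN : ∀ n ∈ N, u * n = 0)
    (hN : ∀ x ∈ N, ∀ y ∈ N, x * y ∈ F ∙ e) {v w : A} (hv : v ∈ (F ∙ u) ⊔ N)
    (hw : w ∈ (F ∙ u) ⊔ N) : v * w ∈ F ∙ e := by
  obtain ⟨_, hs, h, hh, rfl⟩ := mem_sup.mp hv
  obtain ⟨_, hs', h', hh', rfl⟩ := mem_sup.mp hw
  obtain ⟨s, rfl⟩ := mem_span_singleton.mp hs
  obtain ⟨s', rfl⟩ := mem_span_singleton.mp hs'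
  have hhu : h * u = 0 := mul_comm u h ▸ huN h hh
  simp only [add_mul, mul_add, smul_mul_assoc, mul_smul_comm, huu, huN h' hh', hhu, smul_zero,
    add_zero, zero_add]
  exact add_mem (smul_mem _ _ (smul_mem _ _ (mem_span_singleton_self _))) (hN h hh h' hh')

end Square

section IdentitySum

variable {a b : A}

lemma exists_eq_half_smul_add_smul_add [NeZero (2 : F)] (ha : IsAxis F (1 / 2) a) {η : F}
    (hb : IsAxis F η b) (he : ∀ x, (a + b) * x = x) (hli : LinearIndependent F ![a + b, a - b])
    {c : A}
    (hc : ∃ k : F, (a - (1 / 2 : F) • (a + b)) * (c - (1 / 2 : F) • (a + b)) = k • (a + b)) :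
    ∃ (β : F) (h : A), h ∈ eigSp F a (1 / 2) ∧ c = (1 / 2 : F) • (a + b) + β • (a - b) + h := by
  obtain ⟨α, β, h, hh, rfl⟩ := exists_eq_smul_add_smul_add ha hb he c
  obtain ⟨k, hk⟩ := hc
  have hva : a - (1 / 2 : F) • (a + b) = (1 / 2 : F) • (a - b) := by
    linear_combination (norm := module) -(add_halves (1 : F)) • a
  have hue : (a - b) * (a + b) = a - b := mul_comm (a + b) _ ▸ he _
  rw [hva, smul_mul_assoc, mul_sub, mul_add, mul_add, mul_smul_comm, mul_smul_comm, mul_smul_comm,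
    hue, sub_mul_sub_of_add_mul_eq_self ha.idem he, (mem_eigSp_half_iff he).mp hh] at hk
  obtain ⟨-, hα⟩ := LinearIndependent.pair_iff.mp hli (β / 2 - k) ((α - 1 / 2) / 2)
    (by linear_combination (norm := module) hk)
  refine ⟨β, h, hh, ?_⟩
  rw [show α = 1 / 2 by simpa [sub_eq_zero, two_ne_zero] using hα]

lemma mul_mem_span_of_isAxis [NeZero (2 : F)] (ha : IsAxis F (1 / 2) a) {η : F}
    (hb : IsAxis F η b) (he : ∀ x, (a + b) * x = x) (hli : LinearIndependent F ![a + b, a - b])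
    {c h : A} {β : F} (hc : IsAxis F (1 / 2) c) (hh : h ∈ eigSp F a (1 / 2))
    (hcf : c = (1 / 2 : F) • (a + b) + β • (a - b) + h) {x : A} (hx : x ∈ eigSp F a (1 / 2)) :
    h * x ∈ F ∙ (a + b) := by
  by_cases h0 : h = 0
  · simp [h0]
  obtain ⟨p, q, hw⟩ := mem_span_pair.mp
    (eigSp_one_sup_eigSp_zero_le ha hb he (ha.fee h hh x hx))
  have hce : c * (a + b) = c := mul_comm (a + b) c ▸ he c
  have hcu : c * (a - b) = (1 / 2 : F) • (a - b) + β • (a + b) := by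
    rw [mul_comm, hcf, mul_add, mul_add, mul_smul_comm, mul_smul_comm, mul_comm _ (a + b), he,
      sub_mul_sub_of_add_mul_eq_self ha.idem he, (mem_eigSp_half_iff he).mp hh, add_zero]
  have hcx : c * x = (1 / 2 : F) • x + h * x := by
    rw [hcf, add_mul, add_mul, smul_mul_assoc, smul_mul_assoc, he,
      (mem_eigSp_half_iff he).mp hx, smul_zero, add_zero]
  -- `h * x = c * x - x / 2`, so `c * (h * x) = c * (c * x) - c * x / 2 ∈ F ∙ c`
  obtain ⟨r, hr⟩ := mem_span_singleton.mp (hc.mul_mul_sub_smul_mul_mem_span x)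
  have hcw : r • c = p • c + q • ((1 / 2 : F) • (a - b) + β • (a + b)) := by
    rw [hr, hcx, mul_add, mul_smul_comm, hcx, ← hw, mul_add, mul_smul_comm, mul_smul_comm, hce, hcu]
    module
  have hrp : r - p = 0 := by
    have hmem : (r - p) • h ∈ span F {a + b, a - b} := mem_span_pair.mpr
      ⟨q * β - (r - p) / 2, q / 2 - (r - p) * β, by
        rw [hcf] at hcw; linear_combination (norm := module) -hcw⟩
    have := disjoint_def.mp (disjoint_span_eigSp_half ha.idem he) _ hmem (smul_mem _ _ hh)
    exact (smul_eq_zero.mp this).resolve_right h0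
  obtain ⟨-, hq⟩ := LinearIndependent.pair_iff.mp hli (q * β) (q / 2)
    (by linear_combination (norm := module) hrp • c - hcw)
  rw [← hw, show q = 0 by simpa [two_ne_zero] using hq, zero_smul, add_zero]
  exact smul_mem _ _ (mem_span_singleton_self _)

lemma mul_mem_span_of_mem_eigSp_half [NeZero (2 : F)] (haa : a * a = a)
    (he : ∀ x, (a + b) * x = x) {𝒜 : Set A} (hgen : NonUnitalAlgebra.adjoin F 𝒜 = ⊤)
    (h𝒜 : ∀ c ∈ 𝒜, ∃ (β : F) (h : A), h ∈ scalarMulPart (eigSp F a (1 / 2)) (a + b) ∧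
      c = (1 / 2 : F) • (a + b) + β • (a - b) + h) :
    ∀ x ∈ eigSp F a (1 / 2), ∀ y ∈ eigSp F a (1 / 2), x * y ∈ F ∙ (a + b) := by
  intro x hx y hy
  let W := span F {a + b, a - b} ⊔ scalarMulPart (eigSp F a (1 / 2)) (a + b)
  have hW : x ∈ W.toNonUnitalSubalgebra fun _ _ =>
      mul_mem_span_pair_sup_scalarMulPart he (sub_mul_sub_of_add_mul_eq_self haa he)
        fun _ hn => (mem_eigSp_half_iff he).mp hn := by
    refine NonUnitalAlgebra.adjoin_le (fun c hc => ?_) (hgen ▸ NonUnitalAlgebra.mem_top)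
    obtain ⟨β, h, hh, rfl⟩ := h𝒜 c hc
    exact add_mem (mem_sup_left (mem_span_pair.mpr ⟨_, _, rfl⟩)) (mem_sup_right hh)
  obtain ⟨s, hs, m, hm, rfl⟩ := mem_sup.mp hW
  have hs0 : s = 0 := disjoint_def.mp (disjoint_span_eigSp_half haa he) s hs
    (by simpa using sub_mem hx hm.1)
  rw [hs0, zero_add]
  exact hm.2 y hy

end IdentitySum

/-- Let `A` be a primitive axial algebra of Jordan type `1/2`
generated by a set `𝒜` of `(1/2)`-axes.  If `A` contains two `(1/2)`-axes
`a, b ∈ 𝒜` with `a + b` an identity element `e` of `A`, and `v_a v_c ∈ F·e`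
for all `c ∈ 𝒜` (where `v_x = x − (1/2)e`), then `A` is isomorphic to a
Jordan algebra of Clifford type `J(V,B)`. -/
theorem clifford_type_criterion
    {F : Type u} {A : Type v} [Field F] [NonUnitalNonAssocCommRing A]
    [Module F A] [SMulCommClass F A A] [IsScalarTower F A A]
    (hchar : (2 : F) ≠ 0)
    (𝒜 : Set A) (h𝒜 : ∀ a ∈ 𝒜, IsAxis F (1 / 2 : F) a)
    (hgen : NonUnitalAlgebra.adjoin F 𝒜 = ⊤)
    (a b : A) (ha : a ∈ 𝒜) (hb : b ∈ 𝒜)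
    (hident : ∀ x : A, (a + b) * x = x)
    (hvv : ∀ c ∈ 𝒜, ∃ k : F,
      (a - (1 / 2 : F) • (a + b)) * (c - (1 / 2 : F) • (a + b)) = k • (a + b)) :
    Nonempty (CliffordTypeIso F A) := by
  have : NeZero (2 : F) := ⟨hchar⟩
  have haxis := h𝒜 a ha
  have hbxis := h𝒜 b hb
  have hli := linearIndependent_add_sub (F := F) haxis.ne_zero hbxis.ne_zero haxis.idem hident
  have hform : ∀ c ∈ 𝒜, ∃ (β : F) (h : A), h ∈ scalarMulPart (eigSp F a (1 / 2)) (a + b) ∧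
      c = (1 / 2 : F) • (a + b) + β • (a - b) + h := by
    intro c hc
    obtain ⟨β, h, hh, hcf⟩ := exists_eq_half_smul_add_smul_add haxis hbxis hident hli (hvv c hc)
    exact ⟨β, h, ⟨hh, fun x hx =>
      mul_mem_span_of_isAxis haxis hbxis hident hli (h𝒜 c hc) hh hcf hx⟩, hcf⟩
  have hH := mul_mem_span_of_mem_eigSp_half haxis.idem hident hgen hform
  exact ⟨CliffordTypeIso.ofIsCompl (a + b) (hli.ne_zero 0) _
    (isCompl_span_sup_eigSp_half haxis hbxis hident hli) hident
    fun v hv w hw => mul_mem_span_of_mem_span_sup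
      (sub_mul_sub_of_add_mul_eq_self haxis.idem hident)
      (fun _ hn => (mem_eigSp_half_iff hident).mp hn) hH hv hw⟩
end

section
/- Let A be a primitive axial algebra of Jordan type η over a field F with char F ≠ 2, and let a, b be distinct η-axes in A. Then the subalgebra N_{a,b} generated by a and b is 2-dimensional if and only if one of the following holds: (1) ab = 0; (2) η = −1 and ab = −a − b; (3) η = 1/2 and ab = (1/2)a + (1/2)b. Moreover, in cases (2) and (3) the algebra N_{a,b} has no identity element. -/
universe u v

/-!
If `N_{a,b}` is 2-dimensional it is spanned by `a` and `b`, so `ab = αa + βb`. Write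
`b = φa + b₀ + b_η` in the eigenspace decomposition of `a` and compare components of `ab`.
Either `b_η = 0`, and then `b² = b` forces `φ ∈ {0, 1}`: `φ = 0` gives `ab = 0`, while `φ = 1`
would put `a` into `A_1(b) = Fb`. Or `β = η`, `b₀ = 0`, and the `A_η(a)`-component of `b² = b`
gives `2φη = 1`, whence `2αη = 1 - η`. Exchanging `a` and `b` also gives `α = η`, so
`2η² + η - 1 = 0`, i.e. `η = -1` or `η = 1/2`. Conversely, in each of the three cases `span{a, b}`
is closed under multiplication. When `ab = ηa + ηb`, an identity `e = sa + tb` of `N_{a,b}`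
would satisfy both `e = a` (from `ea = a`) and `e = b` (from `eb = b`).
-/

open Submodule

section Adjoin

variable {R A : Type*} [CommSemiring R] [NonUnitalNonAssocSemiring A] [Module R A]
  [SMulCommClass R A A] [IsScalarTower R A A]

theorem NonUnitalAlgebra.adjoin_toSubmodule_eq_span_of_mul_mem {s : Set A}
    (hs : ∀ x ∈ s, ∀ y ∈ s, x * y ∈ span R s) :
    (adjoin R s).toSubmodule = span R s := by
  have hmul (x y : A) (hx : x ∈ span R s) (hy : y ∈ span R s) : x * y ∈ span R s := by
    have hle : span R (Set.image2 (LinearMap.mul R A · ·) s s) ≤ span R s :=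
      span_le.mpr (Set.image2_subset_iff.mpr hs)
    exact hle (map₂_span_span R (LinearMap.mul R A) s s ▸ apply_mem_map₂ _ hx hy)
  exact le_antisymm (adjoin_le (S := (span R s).toNonUnitalSubalgebra hmul) subset_span)
    (span_le.mpr (subset_adjoin R))

end Adjoin

section IdempotentPair

variable {F A : Type*} [Field F] [NonUnitalNonAssocCommRing A] [Module F A]
  [SMulCommClass F A A] [IsScalarTower F A A] {a b : A}

theorem linearIndependent_pair_of_isIdempotentElem (ha : IsIdempotentElem a)
    (hb : IsIdempotentElem b) (ha0 : a ≠ 0) (hb0 : b ≠ 0) (hab : a ≠ b) :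
    LinearIndependent F ![a, b] := by
  refine (LinearIndependent.pair_iff' ha0).mpr fun c hc => ?_
  have hc_idem : IsIdempotentElem c := by
    refine smul_left_injective F ha0 ?_
    calc (c * c) • a = (c • a) * (c • a) := by rw [smul_mul_smul_comm, ha.eq]
      _ = c • a := by rw [hc, hb.eq]
  rcases IsIdempotentElem.iff_eq_zero_or_one.mp hc_idem with rfl | rfl
  · exact hb0 (by rw [← hc, zero_smul])
  · exact hab (by rw [← hc, one_smul])

theorem adjoin_pair_toSubmodule_eq_span (ha : IsIdempotentElem a) (hb : IsIdempotentElem b)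
    (hab : a * b ∈ span F ({a, b} : Set A)) :
    (NonUnitalAlgebra.adjoin F ({a, b} : Set A)).toSubmodule = span F {a, b} := by
  refine NonUnitalAlgebra.adjoin_toSubmodule_eq_span_of_mul_mem ?_
  have ha_mem : a ∈ span F ({a, b} : Set A) := subset_span (by simp)
  have hb_mem : b ∈ span F ({a, b} : Set A) := subset_span (by simp)
  rintro x (rfl | rfl) y (rfl | rfl)
  · rwa [ha.eq]
  · exact hab
  · rwa [mul_comm]
  · rwa [hb.eq]

theorem finrank_adjoin_pair_eq_two_iff (hli : LinearIndependent F ![a, b])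
    (ha : IsIdempotentElem a) (hb : IsIdempotentElem b) :
    Module.finrank F (NonUnitalAlgebra.adjoin F ({a, b} : Set A)).toSubmodule = 2 ↔
      a * b ∈ span F ({a, b} : Set A) := by
  have hspan : Module.finrank F (span F ({a, b} : Set A)) = 2 := by
    rw [← Matrix.range_cons_cons_empty a b ![], finrank_span_eq_card hli, Fintype.card_fin]
  refine ⟨fun hfin => ?_, fun hab => by rwa [adjoin_pair_toSubmodule_eq_span ha hb hab]⟩
  have hle : span F ({a, b} : Set A) ≤ (NonUnitalAlgebra.adjoin F ({a, b} : Set A)).toSubmodule :=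
    span_le.mpr (NonUnitalAlgebra.subset_adjoin F)
  have : FiniteDimensional F (NonUnitalAlgebra.adjoin F ({a, b} : Set A)).toSubmodule :=
    .of_finrank_pos (by rw [hfin]; norm_num)
  rw [eq_of_le_of_finrank_le hle (by rw [hfin, hspan]),
    NonUnitalSubalgebra.mem_toSubmodule]
  exact mul_mem (NonUnitalAlgebra.subset_adjoin F (by simp))
    (NonUnitalAlgebra.subset_adjoin F (by simp))

theorem eq_of_isIdentOf_adjoin_pair (hli : LinearIndependent F ![a, b])
    (ha : IsIdempotentElem a) (hb : IsIdempotentElem b) {α β : F} (hβ : β ≠ 0)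
    (hab : a * b = α • a + β • b) {e : A}
    (he : IsIdentOf F (NonUnitalAlgebra.adjoin F ({a, b} : Set A)) e) : e = a := by
  have hab_mem : a * b ∈ span F ({a, b} : Set A) :=
    hab ▸ add_mem (smul_mem _ _ (subset_span (by simp))) (smul_mem _ _ (subset_span (by simp)))
  have he_mem : e ∈ span F ({a, b} : Set A) := by
    rw [← adjoin_pair_toSubmodule_eq_span ha hb hab_mem]
    exact he.1
  obtain ⟨s, t, rfl⟩ := mem_span_pair.mp he_mem
  have hea : (s + t * α) • a + (t * β) • b = (1 : F) • a + (0 : F) • b :=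
    calc (s + t * α) • a + (t * β) • b = (s • a + t • b) * a := by
          rw [add_mul, smul_mul_assoc, smul_mul_assoc, ha.eq, mul_comm b a, hab]; module
      _ = a := he.2 a (NonUnitalAlgebra.subset_adjoin F (by simp))
      _ = (1 : F) • a + (0 : F) • b := by module
  obtain ⟨hs, ht⟩ := hli.eq_of_pair hea
  obtain rfl : t = 0 := (mul_eq_zero.mp ht).resolve_right hβ
  rw [zero_mul, add_zero] at hs
  rw [hs, one_smul, zero_smul, add_zero]

theorem not_exists_isIdentOf_adjoin_pair (hli : LinearIndependent F ![a, b])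
    (ha : IsIdempotentElem a) (hb : IsIdempotentElem b) {α β : F} (hα : α ≠ 0) (hβ : β ≠ 0)
    (hab : a * b = α • a + β • b) :
    ¬∃ e, IsIdentOf F (NonUnitalAlgebra.adjoin F ({a, b} : Set A)) e := by
  rintro ⟨e, he⟩
  have hea : e = a := eq_of_isIdentOf_adjoin_pair hli ha hb hβ hab he
  have heb : e = b := by
    refine eq_of_isIdentOf_adjoin_pair (LinearIndependent.pair_symm_iff.mp hli) hb ha hα
      (by rw [mul_comm, hab, add_comm]) ?_
    rwa [Set.pair_comm]
  exact hli.injective.ne zero_ne_one (hea.symm.trans heb)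

end IdempotentPair

section Axis

variable {F A : Type*} [Field F] [NonUnitalNonAssocCommRing A] [Module F A]
  [SMulCommClass F A A] {η : F} {a b : A}

theorem IsAxis.exists_decomp (ha : IsAxis F η a) (x : A) :
    ∃ (c : F) (x₀ xη : A), x₀ ∈ eigSp F a 0 ∧ xη ∈ eigSp F a η ∧ x = c • a + x₀ + xη := by
  have hx : x ∈ eigSp F a 1 ⊔ eigSp F a 0 ⊔ eigSp F a η := ha.decomp ▸ mem_top
  obtain ⟨y, hy, xη, hxη, rfl⟩ := mem_sup.mp hx
  obtain ⟨x₁, hx₁, x₀, hx₀, rfl⟩ := mem_sup.mp hy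
  obtain ⟨c, rfl⟩ := mem_span_singleton.mp (ha.prim ▸ hx₁)
  exact ⟨c, x₀, xη, hx₀, hxη, rfl⟩

theorem IsAxis.mul_decomp (ha : IsAxis F η a) {x₀ xη : A} (h₀ : x₀ ∈ eigSp F a 0)
    (hη : xη ∈ eigSp F a η) (c : F) : a * (c • a + x₀ + xη) = c • a + η • xη := by
  rw [mul_add, mul_add, mul_smul_comm, ha.idem, show a * x₀ = (0 : F) • x₀ from h₀,
    show a * xη = η • xη from hη, zero_smul, add_zero]

theorem IsAxis.decomp_eq_zero (hη0 : η ≠ 0) (hη1 : η ≠ 1) (ha : IsAxis F η a) {c : F}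
    {x₀ xη : A} (h₀ : x₀ ∈ eigSp F a 0) (hη : xη ∈ eigSp F a η) (h : c • a + x₀ + xη = 0) :
    c = 0 ∧ x₀ = 0 ∧ xη = 0 := by
  have h₁ : c • a + η • xη = 0 := by rw [← ha.mul_decomp h₀ hη, h, mul_zero]
  have h₂ : c • a + η • (η • xη) = 0 :=
    calc c • a + η • (η • xη) = a * (c • a + η • xη) := by
          rw [mul_add, mul_smul_comm, mul_smul_comm, ha.idem, show a * xη = η • xη from hη]
      _ = 0 := by rw [h₁, mul_zero]
  have hxη : (η * (1 - η)) • xη = 0 := by linear_combination (norm := module) h₁ - h₂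
  obtain rfl : xη = 0 :=
    (smul_eq_zero.mp hxη).resolve_left (mul_ne_zero hη0 (sub_ne_zero.mpr hη1.symm))
  obtain rfl : c = 0 := by
    rw [smul_zero, add_zero] at h₁
    exact (smul_eq_zero.mp h₁).resolve_right ha.ne_zero
  simpa using h

theorem IsAxis.decomp_unique (hη0 : η ≠ 0) (hη1 : η ≠ 1) (ha : IsAxis F η a) {c c' : F}
    {x₀ x₀' xη xη' : A} (h₀ : x₀ ∈ eigSp F a 0) (h₀' : x₀' ∈ eigSp F a 0)
    (hη : xη ∈ eigSp F a η) (hη' : xη' ∈ eigSp F a η)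
    (h : c • a + x₀ + xη = c' • a + x₀' + xη') : c = c' ∧ x₀ = x₀' ∧ xη = xη' := by
  have := ha.decomp_eq_zero hη0 hη1 (sub_mem h₀ h₀') (sub_mem hη hη') (c := c - c')
    (by linear_combination (norm := module) h)
  simpa only [sub_eq_zero] using this

variable [IsScalarTower F A A]

theorem IsAxis.isIdempotentElem_of_smul_add_mem_zero (hη0 : η ≠ 0) (hη1 : η ≠ 1)
    (ha : IsAxis F η a) {φ : F} {b₀ : A} (h₀ : b₀ ∈ eigSp F a 0)
    (hb : IsIdempotentElem (φ • a + b₀)) : IsIdempotentElem φ := by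
  have hab₀ : a * b₀ = 0 := (h₀ : a * b₀ = (0 : F) • b₀).trans (zero_smul F b₀)
  have hb₀a : b₀ * a = 0 := mul_comm b₀ a ▸ hab₀
  have hsq : (φ * φ) • a + b₀ * b₀ + 0 = φ • a + b₀ + 0 := by
    rw [← hb.eq]
    simp only [add_mul, mul_add, smul_mul_assoc, mul_smul_comm, smul_smul, ha.idem, hab₀,
      hb₀a, smul_zero, add_zero, zero_add]
  exact (ha.decomp_unique hη0 hη1 (ha.f00 _ h₀ _ h₀) h₀ (zero_mem _) (zero_mem _) hsq).1

theorem IsAxis.two_mul_mul_eq_one_of_smul_add_mem_eta (hη0 : η ≠ 0) (hη1 : η ≠ 1)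
    (ha : IsAxis F η a) {φ : F} {bη : A} (hη : bη ∈ eigSp F a η) (hbη : bη ≠ 0)
    (hb : IsIdempotentElem (φ • a + bη)) : 2 * φ * η = 1 := by
  have habη : a * bη = η • bη := hη
  have hbηa : bη * a = η • bη := mul_comm bη a ▸ habη
  obtain ⟨y, hy, z₀, hz₀, hsq⟩ := mem_sup.mp (ha.fee _ hη _ hη)
  obtain ⟨γ, rfl⟩ := mem_span_singleton.mp (ha.prim ▸ hy)
  have hb' : (φ * φ + γ) • a + z₀ + (2 * φ * η) • bη = φ • a + 0 + (1 : F) • bη := by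
    calc (φ * φ + γ) • a + z₀ + (2 * φ * η) • bη = (φ • a + bη) * (φ • a + bη) := by
          simp only [add_mul, mul_add, smul_mul_assoc, mul_smul_comm, smul_smul, ha.idem,
            habη, hbηa, ← hsq]
          module
      _ = φ • a + 0 + (1 : F) • bη := by rw [hb.eq]; module
  exact smul_left_injective F hbη (ha.decomp_unique hη0 hη1 hz₀ (zero_mem _)
    (smul_mem _ _ hη) (smul_mem _ _ hη) hb').2.2

theorem IsAxis.mul_eq_zero_or_of_mul_eq (hη0 : η ≠ 0) (hη1 : η ≠ 1) (ha : IsAxis F η a)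
    (hb : IsAxis F η b) (hli : LinearIndependent F ![a, b]) {α β : F}
    (h : a * b = α • a + β • b) : a * b = 0 ∨ β = η ∧ 2 * α * η = 1 - η := by
  obtain ⟨φ, b₀, bη, h₀, hη, hbd⟩ := ha.exists_decomp b
  have hab : a * b = φ • a + η • bη := hbd ▸ ha.mul_decomp h₀ hη φ
  obtain ⟨hφ, hβb₀, hβbη⟩ : φ = α + β * φ ∧ 0 = β • b₀ ∧ η • bη = β • bη := by
    refine ha.decomp_unique hη0 hη1 (zero_mem _) (smul_mem _ _ h₀) (smul_mem _ _ hη)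
      (smul_mem _ _ hη) ?_
    rw [add_zero, ← hab, h, hbd]
    module
  by_cases hbη : bη = 0
  · subst hbη
    rw [add_zero] at hbd
    have hφ_idem := ha.isIdempotentElem_of_smul_add_mem_zero hη0 hη1 h₀ (hbd ▸ hb.idem)
    rcases IsIdempotentElem.iff_eq_zero_or_one.mp hφ_idem with rfl | rfl
    · left
      rw [hab, zero_smul, smul_zero, add_zero]
    · have ha_mem : a ∈ eigSp F b 1 := by
        show b * a = (1 : F) • a
        rw [mul_comm, hab, smul_zero, add_zero]
      obtain ⟨d, hd⟩ := mem_span_singleton.mp (hb.prim ▸ ha_mem)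
      exact absurd (hli.eq_zero_of_pair' (s := 1) (t := d) (by rw [one_smul, hd])).1 one_ne_zero
  · have hβ : β = η := (smul_left_injective F hbη hβbη).symm
    obtain rfl : b₀ = 0 :=
      (smul_eq_zero.mp hβb₀.symm).resolve_left (hβ ▸ hη0)
    rw [add_zero] at hbd
    have h2φη := ha.two_mul_mul_eq_one_of_smul_add_mem_eta hη0 hη1 hη hbη (hbd ▸ hb.idem)
    refine .inr ⟨hβ, ?_⟩
    rw [hβ] at hφ
    linear_combination (-2 * η) * hφ + (1 - η) * h2φη

theorem IsAxis.mul_mem_span_pair_iff (hη0 : η ≠ 0) (hη1 : η ≠ 1) (ha : IsAxis F η a)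
    (hb : IsAxis F η b) (hab : a ≠ b) :
    a * b ∈ span F ({a, b} : Set A) ↔
      a * b = 0 ∨ (η = -1 ∧ a * b = -a - b) ∨
        (η = 1 / 2 ∧ a * b = (1 / 2 : F) • a + (1 / 2 : F) • b) := by
  have hli : LinearIndependent F ![a, b] :=
    linearIndependent_pair_of_isIdempotentElem ha.idem hb.idem ha.ne_zero hb.ne_zero hab
  have ha_mem : a ∈ span F ({a, b} : Set A) := subset_span (by simp)
  have hb_mem : b ∈ span F ({a, b} : Set A) := subset_span (by simp)
  refine ⟨fun hmem => ?_, ?_⟩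
  · obtain ⟨α, β, hαβ⟩ := mem_span_pair.mp hmem
    rcases ha.mul_eq_zero_or_of_mul_eq hη0 hη1 hb hli hαβ.symm with h0 | ⟨hβ, hαβη⟩
    · exact .inl h0
    rcases hb.mul_eq_zero_or_of_mul_eq hη0 hη1 ha (LinearIndependent.pair_symm_iff.mp hli)
      (by rw [mul_comm, ← hαβ, add_comm]) with h0 | ⟨hα, -⟩
    · exact .inl (mul_comm a b ▸ h0)
    have hab_eq : a * b = η • a + η • b := by rw [← hαβ, hα, hβ]
    have hη_roots : (η + 1) * (2 * η - 1) = 0 := by linear_combination hαβη - 2 * η * hα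
    rcases mul_eq_zero.mp hη_roots with hη | hη
    · obtain rfl : η = -1 := eq_neg_of_add_eq_zero_left hη
      exact .inr (.inl ⟨rfl, by rw [hab_eq]; module⟩)
    · obtain rfl : η = 1 / 2 := eq_one_div_of_mul_eq_one_right (sub_eq_zero.mp hη)
      exact .inr (.inr ⟨rfl, hab_eq⟩)
  · rintro (h | ⟨-, h⟩ | ⟨-, h⟩) <;> rw [h]
    · exact zero_mem _
    · exact sub_mem (neg_mem ha_mem) hb_mem
    · exact add_mem (smul_mem _ _ ha_mem) (smul_mem _ _ hb_mem)

end Axis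

theorem two_dimensional_two_generated_subalgebras_general
    {F : Type u} {A : Type v} [Field F] [NonUnitalNonAssocCommRing A]
    [Module F A] [SMulCommClass F A A] [IsScalarTower F A A]
    (η : F) (hη0 : η ≠ 0) (hη1 : η ≠ 1)
    (a b : A) (ha : IsAxis F η a) (hb : IsAxis F η b) (hab : a ≠ b) :
    (Module.finrank F ↥((NonUnitalAlgebra.adjoin F ({a, b} : Set A)).toSubmodule) = 2 ↔
      (a * b = 0 ∨
       (η = -1 ∧ a * b = -a - b) ∨
       (η = 1 / 2 ∧ a * b = (1 / 2 : F) • a + (1 / 2 : F) • b))) ∧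
    (((η = -1 ∧ a * b = -a - b) ∨
      (η = 1 / 2 ∧ a * b = (1 / 2 : F) • a + (1 / 2 : F) • b)) →
      ¬ ∃ e : A, IsIdentOf F (NonUnitalAlgebra.adjoin F ({a, b} : Set A)) e) := by
  have hli : LinearIndependent F ![a, b] :=
    linearIndependent_pair_of_isIdempotentElem ha.idem hb.idem ha.ne_zero hb.ne_zero hab
  refine ⟨(finrank_adjoin_pair_eq_two_iff hli ha.idem hb.idem).trans
    (ha.mul_mem_span_pair_iff hη0 hη1 hb hab), ?_⟩
  rintro (⟨rfl, h⟩ | ⟨rfl, h⟩)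
  · exact not_exists_isIdentOf_adjoin_pair hli ha.idem hb.idem hη0 hη0 (by rw [h]; module)
  · exact not_exists_isIdentOf_adjoin_pair hli ha.idem hb.idem hη0 hη0 h

/-- For distinct `η`-axes `a, b` in a primitive axial algebra of
Jordan type `η`, the subalgebra `N_{a,b}` generated by `a` and `b` is
2-dimensional iff (1) `ab = 0`, or (2) `η = −1` and `ab = −a − b`, or
(3) `η = 1/2` and `ab = (1/2)a + (1/2)b`; moreover in cases (2) and (3)
`N_{a,b}` has no identity element. -/
theorem two_dimensional_two_generated_subalgebras
    {F : Type u} {A : Type v} [Field F] [NonUnitalNonAssocCommRing A]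
    [Module F A] [SMulCommClass F A A] [IsScalarTower F A A]
    (hchar : (2 : F) ≠ 0) (η : F) (hη0 : η ≠ 0) (hη1 : η ≠ 1)
    (𝒜 : Set A) (h𝒜 : ∀ a ∈ 𝒜, IsAxis F η a)
    (hgen : NonUnitalAlgebra.adjoin F 𝒜 = ⊤)
    (a b : A) (ha : IsAxis F η a) (hb : IsAxis F η b) (hab : a ≠ b) :
    (Module.finrank F ↥((NonUnitalAlgebra.adjoin F ({a, b} : Set A)).toSubmodule) = 2 ↔
      (a * b = 0 ∨
       (η = -1 ∧ a * b = -a - b) ∨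
       (η = 1 / 2 ∧ a * b = (1 / 2 : F) • a + (1 / 2 : F) • b))) ∧
    (((η = -1 ∧ a * b = -a - b) ∨
      (η = 1 / 2 ∧ a * b = (1 / 2 : F) • a + (1 / 2 : F) • b)) →
      ¬ ∃ e : A, IsIdentOf F (NonUnitalAlgebra.adjoin F ({a, b} : Set A)) e) :=
  two_dimensional_two_generated_subalgebras_general η hη0 hη1 a b ha hb hab
end

section
/- Let A be a primitive axial algebra of Jordan type η over a field F with char F ≠ 2, generated by a closed set 𝒜 of η-axes with |𝒜| > 1. Then for all a, b ∈ 𝒜, the product satisfies ab = (η/2)a + φ_a(b)·b − (η/2)·a^{τ_b}, where a^{τ_b} is the image of a under the Miyamoto involution τ_b. -/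
universe u v

/-!
Decompose `a = ψ b + a₀ + aₑ` with respect to the axis `b`. Then `ab = ψ b + η aₑ` and
`a^{τ_b} = ψ b + a₀ - aₑ`, so `ab = (η/2)(a - a^{τ_b}) + ψ b`, and it remains to see that
`ψ = φ_b(a)` equals `φ = φ_a(b)`. Comparing the `a`-coefficients of `b(ab) - η ab = (1 - η) ψ b`,
computed once through the decomposition of `a` along `b` and once through that of `b` along `a`
(where `b² = b` pins down the `a`-coefficient of the square of the `η`-part), gives `ψ φ = φ²`.
By symmetry also `φ ψ = ψ²`, hence `(φ - ψ)² = 0`.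
-/

section ProductFormula

variable {F : Type u} {A : Type v} [Field F] [NonUnitalNonAssocCommRing A]
  [Module F A] [SMulCommClass F A A] {η : F} {a b u v : A} {c d : F}

theorem mem_eigSp_iff {l : F} : u ∈ eigSp F a l ↔ a * u = l • u := Iff.rfl

theorem mul_smul_add_add_of_mem_eigSp {u₀ uₑ : A} (c : F) (haa : a * a = a)
    (h₀ : u₀ ∈ eigSp F a 0) (hₑ : uₑ ∈ eigSp F a η) :
    a * (c • a + u₀ + uₑ) = c • a + η • uₑ := by
  rw [mul_add, mul_add, mul_smul_comm, haa, mem_eigSp_iff.mp h₀, mem_eigSp_iff.mp hₑ, zero_smul,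
    add_zero]

namespace IsProjCoeff

theorem add (hu : IsProjCoeff F η a u c) (hv : IsProjCoeff F η a v d) :
    IsProjCoeff F η a (u + v) (c + d) := by
  obtain ⟨u₀, hu₀, uₑ, huₑ, rfl⟩ := hu
  obtain ⟨v₀, hv₀, vₑ, hvₑ, rfl⟩ := hv
  exact ⟨u₀ + v₀, add_mem hu₀ hv₀, uₑ + vₑ, add_mem huₑ hvₑ, by module⟩

theorem sub (hu : IsProjCoeff F η a u c) (hv : IsProjCoeff F η a v d) :
    IsProjCoeff F η a (u - v) (c - d) := by
  obtain ⟨u₀, hu₀, uₑ, huₑ, rfl⟩ := hu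
  obtain ⟨v₀, hv₀, vₑ, hvₑ, rfl⟩ := hv
  exact ⟨u₀ - v₀, sub_mem hu₀ hv₀, uₑ - vₑ, sub_mem huₑ hvₑ, by module⟩

theorem smul (k : F) (hu : IsProjCoeff F η a u c) : IsProjCoeff F η a (k • u) (k * c) := by
  obtain ⟨u₀, hu₀, uₑ, huₑ, rfl⟩ := hu
  exact ⟨k • u₀, Submodule.smul_mem _ k hu₀, k • uₑ, Submodule.smul_mem _ k huₑ, by module⟩

/-- Multiplying by `a` twice kills the `0`-part and scales the `η`-part by `η` and `η²`,
which separates the `1`-part from the rest as soon as `η ≠ 1`. -/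
theorem unique (ha : IsAxis F η a) (hη1 : η ≠ 1) (hc : IsProjCoeff F η a u c)
    (hd : IsProjCoeff F η a u d) : c = d := by
  obtain ⟨w₀, hw₀, wₑ, hwₑ, hw⟩ := hc.sub hd
  rw [sub_self] at hw
  have h₁ : (c - d) • a + η • wₑ = 0 := by
    rw [← mul_smul_add_add_of_mem_eigSp _ ha.idem hw₀ hwₑ, ← hw, mul_zero]
  have h₂ : (c - d) • a + η • η • wₑ = 0 := by
    rw [← mul_smul_add_add_of_mem_eigSp _ ha.idem (zero_mem _) (Submodule.smul_mem _ η hwₑ),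
      add_zero, h₁, mul_zero]
  have h₃ : ((η - 1) * (c - d)) • a = 0 := by
    linear_combination (norm := module) η • h₁ - h₂
  rcases smul_eq_zero.mp h₃ with h | h
  · exact sub_eq_zero.mp ((mul_eq_zero.mp h).resolve_left (sub_ne_zero.mpr hη1))
  · exact absurd h ha.ne_zero

end IsProjCoeff

namespace IsAxis

theorem exists_smul_add_of_mem_sup (ha : IsAxis F η a) (hu : u ∈ eigSp F a 1 ⊔ eigSp F a 0) :
    ∃ c : F, ∃ u₀ ∈ eigSp F a 0, u = c • a + u₀ := by
  obtain ⟨u₁, hu₁, u₀, hu₀, rfl⟩ := Submodule.mem_sup.mp hu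
  rw [ha.prim] at hu₁
  obtain ⟨c, rfl⟩ := Submodule.mem_span_singleton.mp hu₁
  exact ⟨c, u₀, hu₀, rfl⟩

theorem exists_isProjCoeff (ha : IsAxis F η a) (u : A) : ∃ c, IsProjCoeff F η a u c := by
  have hu : u ∈ eigSp F a 1 ⊔ eigSp F a 0 ⊔ eigSp F a η := ha.decomp ▸ Submodule.mem_top
  obtain ⟨u', hu', uₑ, huₑ, rfl⟩ := Submodule.mem_sup.mp hu
  obtain ⟨c, u₀, hu₀, rfl⟩ := ha.exists_smul_add_of_mem_sup hu'
  exact ⟨c, u₀, hu₀, uₑ, huₑ, rfl⟩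

theorem projCoeff_mul_eq_sq [IsScalarTower F A A] (ha : IsAxis F η a) (hη1 : η ≠ 1)
    (hbb : b * b = b) {φ ψ : F} (hφ : IsProjCoeff F η a b φ) (hψ : IsProjCoeff F η b a ψ) :
    ψ * φ = φ * φ := by
  obtain ⟨x, hx, y, hy, hb⟩ := id hφ
  obtain ⟨α, z, hz, hyy⟩ := ha.exists_smul_add_of_mem_sup (ha.fee y hy y hy)
  have hxy : x * y ∈ eigSp F a η := ha.fpe x (Submodule.mem_sup_right hx) y hy
  have hab : a * b = φ • a + η • y := by rw [hb, mul_smul_add_add_of_mem_eigSp φ ha.idem hx hy]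
  have hba : IsProjCoeff F η a (b * a) φ :=
    ⟨0, zero_mem _, η • y, Submodule.smul_mem _ η hy, by rw [mul_comm, hab, add_zero]⟩
  have hbx : IsProjCoeff F η a (b * x) 0 :=
    ⟨x * x, ha.f00 x hx x hx, x * y, hxy, by
      rw [hb, add_mul, add_mul, smul_mul_assoc, mul_comm y, mem_eigSp_iff.mp hx]
      module⟩
  have hby : IsProjCoeff F η a (b * y) α :=
    ⟨z, hz, (φ * η) • y + x * y, add_mem (Submodule.smul_mem _ _ hy) hxy, by
      rw [hb, add_mul, add_mul, smul_mul_assoc, mem_eigSp_iff.mp hy, hyy]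
      module⟩
  have hsq : φ * φ + 0 + α = φ := by
    refine IsProjCoeff.unique ha hη1 ?_ hφ
    rw [← hbb]
    nth_rewrite 2 [hb]
    rw [mul_add, mul_add, mul_smul_comm]
    exact ((hba.smul φ).add hbx).add hby
  have hviaA : IsProjCoeff F η a (b * (a * b) - η • (a * b)) (φ * φ + η * α - η * φ) := by
    rw [hab, mul_add, mul_smul_comm, mul_smul_comm, ← hab, mul_comm a b]
    exact ((hba.smul φ).add (hby.smul η)).sub (hba.smul η)
  have hviaB : b * (a * b) - η • (a * b) = ((1 - η) * ψ) • b := by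
    obtain ⟨x', hx', y', hy', ha'⟩ := hψ
    have hab' : a * b = ψ • b + η • y' := by
      rw [mul_comm, ha', mul_smul_add_add_of_mem_eigSp ψ hbb hx' hy']
    have hbab : b * (ψ • b + η • y') = ψ • b + η • η • y' := by
      simpa using mul_smul_add_add_of_mem_eigSp ψ hbb (zero_mem _) (Submodule.smul_mem _ η hy')
    rw [hab', hbab]
    module
  have hcoeff := IsProjCoeff.unique ha hη1 (hviaB ▸ hφ.smul ((1 - η) * ψ)) hviaA
  have h : (1 - η) * (ψ * φ) = (1 - η) * (φ * φ) := by linear_combination hcoeff + η * hsq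
  exact mul_left_cancel₀ (sub_ne_zero.mpr hη1.symm) h

theorem projCoeff_symm [IsScalarTower F A A] (ha : IsAxis F η a) (hb : IsAxis F η b)
    (hη1 : η ≠ 1) {φ ψ : F} (hφ : IsProjCoeff F η a b φ) (hψ : IsProjCoeff F η b a ψ) : φ = ψ := by
  have h₁ := ha.projCoeff_mul_eq_sq hη1 hb.idem hφ hψ
  have h₂ := hb.projCoeff_mul_eq_sq hη1 ha.idem hψ hφ
  have h : (φ - ψ) ^ 2 = 0 := by linear_combination -h₁ - h₂
  exact sub_eq_zero.mp (pow_eq_zero_iff two_ne_zero |>.mp h)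

end IsAxis

namespace IsMiyamoto

variable {τ : A → A}

theorem apply_smul_add_add (hτ : IsMiyamoto F η b τ) (hbb : b * b = b) {u₀ uₑ : A} (c : F)
    (h₀ : u₀ ∈ eigSp F b 0) (hₑ : uₑ ∈ eigSp F b η) :
    τ (c • b + u₀ + uₑ) = c • b + u₀ - uₑ := by
  have hb : b ∈ eigSp F b 1 := by rw [mem_eigSp_iff, hbb, one_smul]
  rw [hτ.map_add, hτ.fixes _ (Submodule.add_mem_sup (Submodule.smul_mem _ c hb) h₀),
    hτ.negates _ hₑ, sub_eq_add_neg]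

theorem mul_eq (hchar : (2 : F) ≠ 0) (hτ : IsMiyamoto F η b τ) (hbb : b * b = b) {ψ : F}
    (hψ : IsProjCoeff F η b a ψ) : a * b = (η / 2) • a + ψ • b - (η / 2) • τ a := by
  obtain ⟨a₀, ha₀, aₑ, haₑ, rfl⟩ := hψ
  rw [hτ.apply_smul_add_add hbb ψ ha₀ haₑ, mul_comm, mul_smul_add_add_of_mem_eigSp ψ hbb ha₀ haₑ]
  match_scalars <;> field_simp <;> ring

end IsMiyamoto

end ProductFormula

theorem product_formula_for_axes_general
    {F : Type u} {A : Type v} [Field F] [NonUnitalNonAssocCommRing A]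
    [Module F A] [SMulCommClass F A A] [IsScalarTower F A A]
    (hchar : (2 : F) ≠ 0) (η : F) (hη1 : η ≠ 1)
    (𝒜 : Set A) (h𝒜 : ∀ a ∈ 𝒜, IsAxis F η a)
    (a : A) (ha : a ∈ 𝒜) (b : A) (hb : b ∈ 𝒜)
    (τb : A → A) (hτb : IsMiyamoto F η b τb)
    (φ : F) (hφ : IsProjCoeff F η a b φ) :
    a * b = (η / 2) • a + φ • b - (η / 2) • τb a := by
  have haAxis := h𝒜 a ha
  have hbAxis := h𝒜 b hb
  obtain ⟨ψ, hψ⟩ := hbAxis.exists_isProjCoeff a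
  rw [haAxis.projCoeff_symm hbAxis hη1 hφ hψ]
  exact hτb.mul_eq hchar hbAxis.idem hψ

/-- If `A` is generated by a closed set `𝒜` of `η`-axes with
`|𝒜| > 1`, then `ab = (η/2)a + φ_a(b)·b − (η/2)·a^{τ_b}` for all `a, b ∈ 𝒜`. -/
theorem product_formula_for_axes
    {F : Type u} {A : Type v} [Field F] [NonUnitalNonAssocCommRing A]
    [Module F A] [SMulCommClass F A A] [IsScalarTower F A A]
    (hchar : (2 : F) ≠ 0) (η : F) (hη0 : η ≠ 0) (hη1 : η ≠ 1)
    (𝒜 : Set A) (h𝒜 : ∀ a ∈ 𝒜, IsAxis F η a)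
    (hgen : NonUnitalAlgebra.adjoin F 𝒜 = ⊤)
    (hclosed : ∀ a ∈ 𝒜, ∀ b ∈ 𝒜, ∀ τ : A → A, IsMiyamoto F η b τ → τ a ∈ 𝒜)
    (hcard : 𝒜.Nontrivial)
    (a : A) (ha : a ∈ 𝒜) (b : A) (hb : b ∈ 𝒜)
    (τb : A → A) (hτb : IsMiyamoto F η b τb)
    (φ : F) (hφ : IsProjCoeff F η a b φ) :
    a * b = (η / 2) • a + φ • b - (η / 2) • τb a :=
  product_formula_for_axes_general hchar η hη1 𝒜 h𝒜 a ha b hb τb hτb φ hφ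
end
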